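/- arXiv:1404.3155 — 3 statements merged into one kernel-verified Lean document; each statement's English description precedes it below -/
import Mathlib

section
/- For every positive integer k, a finite simple graph has spaghetti treewidth at most k if and only if every block of it has spaghetti treewidth at most k. -/
open SimpleGraph

/-- The cycle graph on `ZMod n` (for `3 ≤ n` this is a cycle of length `n`). -/
def cycGraph (n : ℕ) : SimpleGraph (ZMod n) :=
  SimpleGraph.fromRel (fun x y => x = y + 1)

/-- The set `s` of nodes induces a path in the graph `H`. -/
def IsPathSet {ι : Type} (H : SimpleGraph ι) (s : Set ι) : Prop :=
  (H.induce s).Connected ∧ ∀ x ∈ s, {y | y ∈ s ∧ H.Adj x y}.ncard ≤ 2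

/-- The set `s` of nodes induces a directed path in `H` with respect to the
orientation `o` of the edges of `H`. -/
def IsDirPathSet {ι : Type} (H : SimpleGraph ι) (o : ι → ι → Prop) (s : Set ι) : Prop :=
  IsPathSet H s ∧ (∀ x ∈ s, {y | y ∈ s ∧ o x y}.ncard ≤ 1) ∧
    (∀ x ∈ s, {y | y ∈ s ∧ o y x}.ncard ≤ 1)

/-- A tree decomposition of a finite simple graph `G`. -/
structure TreeDecomp {V : Type} (G : SimpleGraph V) where
  ι : Type
  finι : Finite ι
  tree : SimpleGraph ι
  isTree : tree.IsTree
  bag : ι → Set V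
  bag_cover : ∀ v : V, ∃ x, v ∈ bag x
  bag_edge : ∀ ⦃u v : V⦄, G.Adj u v → ∃ x, u ∈ bag x ∧ v ∈ bag x
  bag_conn : ∀ v : V, (tree.induce {x | v ∈ bag x}).Connected

/-- A spaghetti tree decomposition: for every vertex `v` of `G`, the nodes whose
bags contain `v` induce a path in the tree. -/
structure SpaghettiTD {V : Type} (G : SimpleGraph V) extends TreeDecomp G where
  bag_path : ∀ v : V, IsPathSet tree {x | v ∈ bag x}

/-- A directed spaghetti tree decomposition: the tree edges are oriented, and for
every vertex `v` of `G` the nodes whose bags contain `v` induce a directed path. -/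
structure DirSpaghettiTD {V : Type} (G : SimpleGraph V) extends TreeDecomp G where
  orient : ι → ι → Prop
  orient_iff : ∀ x y : ι, tree.Adj x y ↔ (orient x y ∨ orient y x)
  orient_asymm : ∀ x y : ι, orient x y → ¬ orient y x
  bag_dirpath : ∀ v : V, IsDirPathSet tree orient {x | v ∈ bag x}

/-- A special tree decomposition: the tree is rooted, and for every vertex `v` of
`G` the nodes whose bags contain `v` induce a vertical path, i.e. a directed path
with respect to the orientation of every tree edge towards the root. -/
structure SpecialTD {V : Type} (G : SimpleGraph V) extends TreeDecomp G where
  root : ι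
  bag_vertical : ∀ v : V,
    IsDirPathSet tree (fun x y => tree.Adj x y ∧ tree.dist y root < tree.dist x root)
      {x | v ∈ bag x}

/-- A path decomposition of a finite simple graph `G`. -/
structure PathDecomp {V : Type} (G : SimpleGraph V) where
  m : ℕ
  hm : 0 < m
  bag : Fin m → Set V
  bag_cover : ∀ v : V, ∃ i, v ∈ bag i
  bag_edge : ∀ ⦃u v : V⦄, G.Adj u v → ∃ i, u ∈ bag i ∧ v ∈ bag i
  bag_convex : ∀ (v : V) (i j k : Fin m), i ≤ j → j ≤ k → v ∈ bag i → v ∈ bag k → v ∈ bag j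

/-- Treewidth: minimal width of a tree decomposition. -/
noncomputable def treewidth {V : Type} (G : SimpleGraph V) : ℕ :=
  sInf {k | ∃ td : TreeDecomp G, ∀ x, (td.bag x).ncard ≤ k + 1}

/-- Spaghetti treewidth: minimal width of a spaghetti tree decomposition. -/
noncomputable def sptw {V : Type} (G : SimpleGraph V) : ℕ :=
  sInf {k | ∃ td : SpaghettiTD G, ∀ x, (td.bag x).ncard ≤ k + 1}

/-- Directed spaghetti treewidth: minimal width of a directed spaghetti tree
decomposition. -/
noncomputable def dptw {V : Type} (G : SimpleGraph V) : ℕ :=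
  sInf {k | ∃ td : DirSpaghettiTD G, ∀ x, (td.bag x).ncard ≤ k + 1}

/-- Special treewidth: minimal width of a special tree decomposition. -/
noncomputable def spctw {V : Type} (G : SimpleGraph V) : ℕ :=
  sInf {k | ∃ td : SpecialTD G, ∀ x, (td.bag x).ncard ≤ k + 1}

/-- Pathwidth: minimal width of a path decomposition. -/
noncomputable def pw {V : Type} (G : SimpleGraph V) : ℕ :=
  sInf {k | ∃ pd : PathDecomp G, ∀ i, (pd.bag i).ncard ≤ k + 1}

/-- A graph is chordal iff it has no induced (i.e. chordless) cycle of length at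
least four. -/
def IsChordal {V : Type} (G : SimpleGraph V) : Prop :=
  ∀ (S : Set V) (n : ℕ), 4 ≤ n → ¬ Nonempty ((G.induce S) ≃g cycGraph n)

/-- A graph is strongly chordal if it is chordal and every even cycle of length at
least six has an odd chord: a chord splitting the cycle into two odd paths of
length at least three. -/
def IsStronglyChordal {V : Type} (G : SimpleGraph V) : Prop :=
  IsChordal G ∧ ∀ n : ℕ, 6 ≤ n → Even n → ∀ f : ZMod n → V,
    Function.Injective f → (∀ i : ZMod n, G.Adj (f i) (f (i + 1))) →
      ∃ (i : ZMod n) (d : ℕ), Odd d ∧ 3 ≤ d ∧ d + 3 ≤ n ∧ G.Adj (f i) (f (i + (d : ZMod n)))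

/-- Strongly chordal treewidth: the minimum of `ω(H) - 1` over all strongly chordal
supergraphs `H` of `G` (on the same vertex set; here `ω(H) ≤ k + 1` is expressed as
`H.CliqueFree (k + 2)`). -/
noncomputable def sctw {V : Type} (G : SimpleGraph V) : ℕ :=
  sInf {k | ∃ H : SimpleGraph V, G ≤ H ∧ IsStronglyChordal H ∧ H.CliqueFree (k + 2)}

/-- `H` is a minor of `G`: there is a family of nonempty, pairwise disjoint,
connected branch sets in `G`, one for each vertex of `H`, such that every edge of
`H` is realized by an edge of `G` between the corresponding branch sets. -/
def IsMinorOf {W V : Type} (H : SimpleGraph W) (G : SimpleGraph V) : Prop :=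
  ∃ f : W → Set V,
    (∀ w, (f w).Nonempty) ∧ (∀ w, (G.induce (f w)).Connected) ∧
    (Pairwise fun w w' => Disjoint (f w) (f w')) ∧
    ∀ ⦃w w'⦄, H.Adj w w' → ∃ u ∈ f w, ∃ v ∈ f w', G.Adj u v

/-- The complete graph on four vertices. -/
def K4 : SimpleGraph (Fin 4) := ⊤

/-- `D₃`: two vertices (`0` and `1`) joined by three internally vertex-disjoint
paths of length three. -/
def D3 : SimpleGraph (Fin 8) := SimpleGraph.fromRel (fun x y =>
  (x = 0 ∧ y = 2) ∨ (x = 2 ∧ y = 3) ∨ (x = 3 ∧ y = 1) ∨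
  (x = 0 ∧ y = 4) ∨ (x = 4 ∧ y = 5) ∨ (x = 5 ∧ y = 1) ∨
  (x = 0 ∧ y = 6) ∨ (x = 6 ∧ y = 7) ∨ (x = 7 ∧ y = 1))

/-- `S₃` (the 3-sun): a 6-cycle `0 1 2 3 4 5` together with the triangle `1 3 5`. -/
def S3 : SimpleGraph (Fin 6) := SimpleGraph.fromRel (fun x y =>
  (x = 0 ∧ y = 1) ∨ (x = 1 ∧ y = 2) ∨ (x = 2 ∧ y = 3) ∨ (x = 3 ∧ y = 4) ∨
  (x = 4 ∧ y = 5) ∨ (x = 5 ∧ y = 0) ∨ (x = 1 ∧ y = 3) ∨ (x = 3 ∧ y = 5) ∨ (x = 5 ∧ y = 1))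

/-- A graph is 2-connected if it has at least three vertices and deleting any one
vertex leaves it connected. -/
def TwoConnected {V : Type} (G : SimpleGraph V) : Prop :=
  3 ≤ Nat.card V ∧ ∀ v : V, (G.induce {x | x ≠ v}).Connected

/-- The cell completion of `G`: add an edge `vw` for every pair of (nonadjacent)
vertices `v, w` such that deleting `v` and `w` leaves at least three connected
components. -/
def cellCompletion {V : Type} (G : SimpleGraph V) : SimpleGraph V :=
  SimpleGraph.fromRel (fun v w => G.Adj v w ∨
    3 ≤ Nat.card ((G.induce {x | x ≠ v ∧ x ≠ w}).ConnectedComponent))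

/-- The induced subgraph of `G` on `S` has no cut vertex. -/
def NoCutVertex {V : Type} (G : SimpleGraph V) (S : Set V) : Prop :=
  ∀ v ∈ S, (S \ {v}).Nonempty → (G.induce (S \ {v})).Connected

/-- `S` carries a block of `G`: a maximal connected (induced) subgraph without a
cut vertex. -/
def IsBlock {V : Type} (G : SimpleGraph V) (S : Set V) : Prop :=
  S.Nonempty ∧ (G.induce S).Connected ∧ NoCutVertex G S ∧
    ∀ S' : Set V, S ⊆ S' → (G.induce S').Connected → NoCutVertex G S' → S' = S

/-- Glue a cycle of length `n` onto the graph `G` by identifying the cycle edge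
`{0, 1}` (with its end vertices) with the edge `{a, b}` of `G`. -/
def glueCycle {V : Type} (G : SimpleGraph V) (n : ℕ) (a b : V) :
    SimpleGraph (V ⊕ {x : ZMod n // x ≠ 0 ∧ x ≠ 1}) :=
  SimpleGraph.fromRel (fun p q =>
    match p, q with
    | Sum.inl u, Sum.inl v => G.Adj u v
    | Sum.inl u, Sum.inr x => (u = a ∧ (cycGraph n).Adj 0 x.1) ∨ (u = b ∧ (cycGraph n).Adj 1 x.1)
    | Sum.inr x, Sum.inr y => (cycGraph n).Adj x.1 y.1
    | Sum.inr _, Sum.inl _ => False)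

/-- The class of trees of cycles: every cycle is a tree of cycles, and gluing a
cycle onto a tree of cycles along an edge yields a tree of cycles (up to
isomorphism). -/
inductive IsTreeOfCycles : {V : Type} → SimpleGraph V → Prop
  | cycle {V : Type} (G : SimpleGraph V) (n : ℕ) (hn : 3 ≤ n)
      (e : Nonempty (G ≃g cycGraph n)) : IsTreeOfCycles G
  | glue {V W : Type} (G : SimpleGraph V) (hG : IsTreeOfCycles G)
      (n : ℕ) (hn : 3 ≤ n) (a b : V) (hab : G.Adj a b)
      (H : SimpleGraph W) (e : Nonempty (H ≃g glueCycle G n a b)) : IsTreeOfCycles H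

/-- `S` is the vertex set of a chordless cycle of `G`, i.e. it induces a cycle. -/
def IsChordlessCycle {V : Type} (G : SimpleGraph V) (S : Set V) : Prop :=
  ∃ n : ℕ, 3 ≤ n ∧ Nonempty ((G.induce S) ≃g cycGraph n)

/-- The edge `uv` is an edge separator: it lies in at least two distinct chordless
cycles of `G`. -/
def IsEdgeSeparator {V : Type} (G : SimpleGraph V) (u v : V) : Prop :=
  G.Adj u v ∧ ∃ S₁ S₂ : Set V, S₁ ≠ S₂ ∧ IsChordlessCycle G S₁ ∧ IsChordlessCycle G S₂ ∧
    u ∈ S₁ ∧ v ∈ S₁ ∧ u ∈ S₂ ∧ v ∈ S₂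

/-- `S` is a simplicial triangle of `G`: a chordless cycle on three vertices
containing a simplicial vertex of `G`. -/
def IsSimplicialTriangle {V : Type} (G : SimpleGraph V) (S : Set V) : Prop :=
  IsChordlessCycle G S ∧ S.ncard = 3 ∧ ∃ v ∈ S, G.IsClique (G.neighborSet v)

/-- A chain tree of cycles: a tree of cycles in which every edge lies in at most two
chordless cycles that are not simplicial triangles (equivalently, if an edge lies in
`m ≥ 3` chordless cycles then at least `m - 2` of them are simplicial triangles). -/
def IsChainTreeOfCycles {V : Type} (G : SimpleGraph V) : Prop :=
  IsTreeOfCycles G ∧ ∀ u v : V, G.Adj u v →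
    {S : Set V | IsChordlessCycle G S ∧ u ∈ S ∧ v ∈ S ∧ ¬ IsSimplicialTriangle G S}.ncard ≤ 2

/-- A tree of two-boundaried cycles: a tree of cycles in which every chordless
cycle contains at most two edge separators. -/
def IsTreeOfTwoBoundariedCycles {V : Type} (G : SimpleGraph V) : Prop :=
  IsTreeOfCycles G ∧ ∀ S : Set V, IsChordlessCycle G S →
    {e : Sym2 V | ∃ u v : V, e = s(u, v) ∧ u ∈ S ∧ v ∈ S ∧ IsEdgeSeparator G u v}.ncard ≤ 2

/-- A path of cycles: a tree of cycles in which every chordless cycle contains at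
most two edge separators and every edge lies in at most two chordless cycles that
are not simplicial triangles. -/
def IsPathOfCycles {V : Type} (G : SimpleGraph V) : Prop :=
  IsTreeOfCycles G ∧
    (∀ S : Set V, IsChordlessCycle G S →
      {e : Sym2 V | ∃ u v : V, e = s(u, v) ∧ u ∈ S ∧ v ∈ S ∧ IsEdgeSeparator G u v}.ncard ≤ 2) ∧
    ∀ u v : V, G.Adj u v →
      {S : Set V | IsChordlessCycle G S ∧ u ∈ S ∧ v ∈ S ∧ ¬ IsSimplicialTriangle G S}.ncard ≤ 2

/-- The graph is a single edge. -/
def IsSingleEdgeGraph {V : Type} (G : SimpleGraph V) : Prop :=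
  Nat.card V = 2 ∧ ∀ a b : V, a ≠ b → G.Adj a b

/-- A mamba: a 2-connected graph of pathwidth two, a single edge, or an isolated
vertex. -/
def IsMamba {V : Type} (G : SimpleGraph V) : Prop :=
  (TwoConnected G ∧ pw G = 2) ∨ IsSingleEdgeGraph G ∨ Nat.card V = 1

/-- `v` is a head vertex of the mamba `G`: some path decomposition of `G` of width
at most two has `v` in its first bag. -/
def IsHeadVertex {V : Type} (G : SimpleGraph V) (v : V) : Prop :=
  ∃ pd : PathDecomp G, (∀ i, (pd.bag i).ncard ≤ 3) ∧ v ∈ pd.bag ⟨0, pd.hm⟩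

/-- Glue the graph `M` onto the graph `G` by identifying the vertex `h` of `M` with
the vertex `x` of `G`. -/
def glueAtVertex {V W : Type} (G : SimpleGraph V) (x : V) (M : SimpleGraph W) (h : W) :
    SimpleGraph (V ⊕ {w : W // w ≠ h}) :=
  SimpleGraph.fromRel (fun p q =>
    match p, q with
    | Sum.inl u, Sum.inl u' => G.Adj u u'
    | Sum.inl u, Sum.inr w => u = x ∧ M.Adj h w.1
    | Sum.inr w, Sum.inr w' => M.Adj w.1 w'.1
    | Sum.inr _, Sum.inl _ => False)

/-- The class of mamba trees: every mamba is a mamba tree, and gluing a mamba onto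
a mamba tree by identifying a vertex of the mamba tree with a head vertex of the
mamba yields a mamba tree (up to isomorphism). -/
inductive IsMambaTree : {V : Type} → SimpleGraph V → Prop
  | mamba {V : Type} (G : SimpleGraph V) (hG : IsMamba G) : IsMambaTree G
  | glue {V W U : Type} (G : SimpleGraph V) (hG : IsMambaTree G)
      (M : SimpleGraph W) (hM : IsMamba M) (x : V) (h : W) (hh : IsHeadVertex M h)
      (K : SimpleGraph U) (e : Nonempty (K ≃g glueAtVertex G x M h)) : IsMambaTree K

/-- Subdivide the edge `{a, b}` of `G` by a new vertex. -/
def subdivideEdge {V : Type} (G : SimpleGraph V) (a b : V) : SimpleGraph (V ⊕ Unit) :=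
  SimpleGraph.fromRel (fun p q =>
    match p, q with
    | Sum.inl u, Sum.inl v => G.Adj u v ∧ ¬(u = a ∧ v = b) ∧ ¬(u = b ∧ v = a)
    | Sum.inl u, Sum.inr _ => u = a ∨ u = b
    | Sum.inr _, _ => False)

/-- `H` is a subdivision of `G`: `H` is obtained from (an isomorphic copy of) `G`
by repeatedly subdividing edges. -/
inductive IsSubdivisionOf : {W V : Type} → SimpleGraph W → SimpleGraph V → Prop
  | base {V W : Type} {G : SimpleGraph V} {H : SimpleGraph W}
      (e : Nonempty (H ≃g G)) : IsSubdivisionOf H G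
  | step {V W U : Type} {G : SimpleGraph V} {H : SimpleGraph W} (a b : W) (hab : H.Adj a b)
      (h : IsSubdivisionOf H G) {K : SimpleGraph U}
      (e : Nonempty (K ≃g subdivideEdge H a b)) : IsSubdivisionOf K G

/-- Contract the edge `{a, b}` of `G` (the contracted vertex is `a`, `b` is removed). -/
def contractEdge {V : Type} (G : SimpleGraph V) (a b : V) : SimpleGraph {x : V // x ≠ b} :=
  SimpleGraph.fromRel (fun x y =>
    G.Adj x.1 y.1 ∨ (x.1 = a ∧ G.Adj b y.1) ∨ (y.1 = a ∧ G.Adj b x.1))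


/-!
Restricting a spaghetti tree decomposition to an induced subgraph keeps it spaghetti, which
gives one direction. Conversely, induct on the number of vertices. A graph that is not itself a
block splits as `G[A] ∪ G[B]` with `|A ∩ B| ≤ 1` (along a disconnection or a cut vertex), and
every block of `G[A]` or `G[B]` is a block of `G`. Decompositions of `G[A]` and `G[B]` are then
joined by one tree edge between nodes at an end of the path of the common vertex on either side:
the nodes of every vertex still form a path, and no bag grows.
-/

open Set

variable {V W ι : Type}

namespace SpaghettiTD

variable {G : SimpleGraph V} {H : SimpleGraph W}

def comap (f : G →g H) (td : SpaghettiTD H) : SpaghettiTD G where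
  ι := td.ι
  finι := td.finι
  tree := td.tree
  isTree := td.isTree
  bag x := f ⁻¹' td.bag x
  bag_cover v := td.bag_cover (f v)
  bag_edge _ _ h := td.bag_edge (f.map_adj h)
  bag_conn v := td.bag_conn (f v)
  bag_path v := td.bag_path (f v)

lemma ncard_bag_comap_le [Finite W] (f : G ↪g H) (td : SpaghettiTD H) (x : td.ι) :
    ((td.comap f.toHom).bag x).ncard ≤ (td.bag x).ncard :=
  calc (f ⁻¹' td.bag x).ncard = (f '' (f ⁻¹' td.bag x)).ncard :=
        (ncard_image_of_injective _ f.injective).symm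
    _ ≤ (td.bag x).ncard := ncard_le_ncard (image_preimage_subset f _)

def single (G : SimpleGraph V) : SpaghettiTD G where
  ι := Unit
  finι := inferInstance
  tree := ⊥
  isTree := .of_subsingleton
  bag _ := univ
  bag_cover _ := ⟨(), trivial⟩
  bag_edge _ _ _ := ⟨(), trivial, trivial⟩
  bag_conn v := have : Nonempty {x : Unit | v ∈ univ} := ⟨⟨(), trivial⟩⟩
    IsTree.of_subsingleton.connected
  bag_path v := have : Nonempty {x : Unit | v ∈ univ} := ⟨⟨(), trivial⟩⟩
    ⟨IsTree.of_subsingleton.connected, by simp⟩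

end SpaghettiTD

lemma sptw_le_of_spaghettiTD {G : SimpleGraph V} {k : ℕ} (td : SpaghettiTD G)
    (h : ∀ x, (td.bag x).ncard ≤ k + 1) : sptw G ≤ k :=
  Nat.sInf_le ⟨td, h⟩

lemma exists_spaghettiTD_ncard_bag_le_sptw [Finite V] (G : SimpleGraph V) :
    ∃ td : SpaghettiTD G, ∀ x, (td.bag x).ncard ≤ sptw G + 1 :=
  Nat.sInf_mem (s := {k | ∃ td : SpaghettiTD G, ∀ x, (td.bag x).ncard ≤ k + 1})
    ⟨Nat.card V, SpaghettiTD.single G, fun _ => by simp [SpaghettiTD.single]⟩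

lemma sptw_le_sptw_of_embedding [Finite W] {G : SimpleGraph V} {H : SimpleGraph W}
    (f : G ↪g H) : sptw G ≤ sptw H := by
  obtain ⟨td, htd⟩ := exists_spaghettiTD_ncard_bag_le_sptw H
  exact sptw_le_of_spaghettiTD (td.comap f.toHom) fun x =>
    (td.ncard_bag_comap_le f x).trans (htd x)

lemma sptw_eq_zero_of_isEmpty [IsEmpty V] (G : SimpleGraph V) : sptw G = 0 :=
  Nat.le_zero.mp <| sptw_le_of_spaghettiTD (SpaghettiTD.single G) fun _ => by
    simp [SpaghettiTD.single]

def IsPathEnd (H : SimpleGraph ι) (s : Set ι) (x : ι) : Prop :=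
  x ∈ s ∧ {y | y ∈ s ∧ H.Adj x y}.ncard ≤ 1

section PathSets

variable {H : SimpleGraph ι} {κ : Type} {H' : SimpleGraph κ} {s t : Set ι}

lemma connected_induce_image (f : H →g H') (h : (H.induce s).Connected) :
    (H'.induce (f '' s)).Connected :=
  let g : H.induce s →g H'.induce (f '' s) := ⟨fun x => ⟨f x, mem_image_of_mem f x.2⟩, f.map_adj⟩
  h.map g (by rintro ⟨_, x, hx, rfl⟩; exact ⟨⟨x, hx⟩, rfl⟩)

lemma SimpleGraph.Embedding.image_setOf_mem_adj (f : H ↪g H') (s : Set ι) (x : ι) :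
    f '' {y | y ∈ s ∧ H.Adj x y} = {y | y ∈ f '' s ∧ H'.Adj (f x) y} := by
  ext y
  constructor
  · rintro ⟨y, ⟨hy, hxy⟩, rfl⟩
    exact ⟨mem_image_of_mem f hy, f.map_adj_iff.mpr hxy⟩
  · rintro ⟨⟨y, hy, rfl⟩, hxy⟩
    exact ⟨y, ⟨hy, f.map_adj_iff.mp hxy⟩, rfl⟩

lemma IsPathSet.image (f : H ↪g H') (h : IsPathSet H s) : IsPathSet H' (f '' s) := by
  refine ⟨connected_induce_image f.toHom h.1, ?_⟩
  rintro _ ⟨x, hx, rfl⟩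
  rw [← Embedding.image_setOf_mem_adj, ncard_image_of_injective _ f.injective]
  exact h.2 x hx

lemma IsPathEnd.image (f : H ↪g H') {x : ι} (h : IsPathEnd H s x) :
    IsPathEnd H' (f '' s) (f x) := by
  refine ⟨mem_image_of_mem f h.1, ?_⟩
  rw [← Embedding.image_setOf_mem_adj, ncard_image_of_injective _ f.injective]
  exact h.2

lemma ncard_setOf_mem_union_adj_le [Finite ι] {a b x : ι} (hs : IsPathSet H s)
    (ha : IsPathEnd H s a) (hst : ∀ x ∈ s, ∀ y ∈ t, H.Adj x y → x = a ∧ y = b) (hx : x ∈ s) :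
    {y | y ∈ s ∪ t ∧ H.Adj x y}.ncard ≤ 2 := by
  have hsub :
      {y | y ∈ s ∪ t ∧ H.Adj x y} ⊆ {y | y ∈ s ∧ H.Adj x y} ∪ {y | x = a ∧ y = b} := by
    rintro y ⟨hy | hy, hxy⟩
    · exact Or.inl ⟨hy, hxy⟩
    · exact Or.inr (hst x hx y hy hxy)
  refine (ncard_le_ncard hsub).trans ((ncard_union_le _ _).trans ?_)
  by_cases hxa : x = a
  · subst hxa
    simpa using Nat.add_le_add_right ha.2 1
  · simpa [hxa] using hs.2 x hx

lemma IsPathSet.union [Finite ι] {a b : ι} (hs : IsPathSet H s) (ht : IsPathSet H t)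
    (ha : IsPathEnd H s a) (hb : IsPathEnd H t b) (hab : H.Adj a b)
    (hst : ∀ x ∈ s, ∀ y ∈ t, H.Adj x y → x = a ∧ y = b) : IsPathSet H (s ∪ t) := by
  refine ⟨connected_induce_union hs.1.preconnected ht.1.preconnected ha.1 hb.1 hab, ?_⟩
  rintro x (hx | hx)
  · exact ncard_setOf_mem_union_adj_le hs ha hst hx
  · rw [union_comm]
    exact ncard_setOf_mem_union_adj_le ht hb
      (fun y hy x hx hyx => (hst x hx y hy hyx.symm).symm) hx

lemma exists_isPathEnd [Finite ι] (hH : H.IsAcyclic) (hs : (H.induce s).Connected) :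
    ∃ x, IsPathEnd H s x := by
  classical
  have := Fintype.ofFinite s
  obtain ⟨x, hx⟩ : ∃ x, (H.induce s).degree x ≤ 1 := by
    rcases subsingleton_or_nontrivial s with _ | _
    · obtain ⟨x⟩ := hs.nonempty
      exact ⟨x, by simp⟩
    · obtain ⟨x, hx⟩ := (IsTree.exists_vert_degree_one_of_nontrivial ⟨hs, hH.induce s⟩)
      exact ⟨x, hx.le⟩
  refine ⟨x, x.2, ?_⟩
  have hnbr : {y | y ∈ s ∧ H.Adj x y} = Subtype.val '' (H.induce s).neighborSet x := by
    ext y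
    simp [and_comm]
  rw [hnbr, ncard_image_of_injective _ Subtype.val_injective, ncard_eq_toFinset_card',
    ← neighborFinset_def, card_neighborFinset_eq_degree]
  exact hx

end PathSets

lemma SimpleGraph.IsTree.sum_sup_edge {κ : Type} [Finite ι] [Finite κ] {TA : SimpleGraph ι}
    {TB : SimpleGraph κ} (hA : TA.IsTree) (hB : TB.IsTree) (a : ι) (b : κ) :
    (TA.sum TB ⊔ edge (Sum.inl a) (Sum.inr b)).IsTree := by
  rw [isTree_iff_connected_and_card] at hA hB ⊢
  refine ⟨hA.1.sum_sup_edge hB.1, ?_⟩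
  have hnew : s(Sum.inl a, Sum.inr b) ∉ (TA ⊕g TB).edgeSet := by simp
  rw [edgeSet_sup, edgeSet_edge_of_ne Sum.inl_ne_inr, union_singleton, Nat.card_coe_set_eq,
    ncard_insert_of_notMem hnew, ← Nat.card_coe_set_eq, Nat.card_congr (edgeSetSumEquiv ..),
    Nat.card_sum, Nat.card_sum]
  omega

structure IsSeparation (G : SimpleGraph V) (A B : Set V) : Prop where
  union_eq : A ∪ B = univ
  adj_mem : ∀ ⦃u v⦄, G.Adj u v → u ∈ A ∧ v ∈ A ∨ u ∈ B ∧ v ∈ B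

lemma IsSeparation.mem_or_mem {G : SimpleGraph V} {A B : Set V} (h : IsSeparation G A B)
    (v : V) : v ∈ A ∨ v ∈ B :=
  (h.union_eq ▸ mem_univ v : v ∈ A ∪ B)

namespace SpaghettiTD

variable {G : SimpleGraph V} {A B : Set V}
  (tdA : SpaghettiTD (G.induce A)) (tdB : SpaghettiTD (G.induce B))

lemma isPathSet_glue (hAB : IsSeparation G A B) {xA : tdA.ι} {xB : tdB.ι}
    (hxA : ∀ w : A, w.1 ∈ B → IsPathEnd tdA.tree {x | w ∈ tdA.bag x} xA)
    (hxB : ∀ w : B, w.1 ∈ A → IsPathEnd tdB.tree {y | w ∈ tdB.bag y} xB) (v : V) :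
    IsPathSet (tdA.tree.sum tdB.tree ⊔ edge (Sum.inl xA) (Sum.inr xB))
      {p | v ∈ Sum.elim (Subtype.val '' tdA.bag ·) (Subtype.val '' tdB.bag ·) p} := by
  have := tdA.finι
  have := tdB.finι
  set nodes := {p | v ∈ Sum.elim (Subtype.val '' tdA.bag ·) (Subtype.val '' tdB.bag ·) p}
  let inl : tdA.tree ↪g tdA.tree.sum tdB.tree ⊔ edge (Sum.inl xA) (Sum.inr xB) :=
    ⟨Function.Embedding.inl, by simp [edge_adj]⟩
  let inr : tdB.tree ↪g tdA.tree.sum tdB.tree ⊔ edge (Sum.inl xA) (Sum.inr xB) :=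
    ⟨Function.Embedding.inr, by simp [edge_adj]⟩
  by_cases hA : v ∈ A <;> by_cases hB : v ∈ B
  · have : nodes = inl '' {x | ⟨v, hA⟩ ∈ tdA.bag x} ∪ inr '' {y | ⟨v, hB⟩ ∈ tdB.bag y} := by
      ext (x | y) <;> simp [nodes, inl, inr, hA, hB]
    rw [this]
    refine (tdA.bag_path _).image inl |>.union ((tdB.bag_path _).image inr)
      ((hxA ⟨v, hA⟩ hB).image inl) ((hxB ⟨v, hB⟩ hA).image inr) (by simp [inl, inr, edge_adj]) ?_
    rintro _ ⟨x, -, rfl⟩ _ ⟨y, -, rfl⟩ hxy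
    simpa [inl, inr, edge_adj] using hxy
  · have : nodes = inl '' {x | ⟨v, hA⟩ ∈ tdA.bag x} := by
      ext (x | y) <;> simp [nodes, inl, hA, hB]
    rw [this]
    exact (tdA.bag_path _).image inl
  · have : nodes = inr '' {y | ⟨v, hB⟩ ∈ tdB.bag y} := by
      ext (x | y) <;> simp [nodes, inr, hA, hB]
    rw [this]
    exact (tdB.bag_path _).image inr
  · exact ((hAB.mem_or_mem v).elim hA hB).elim

def glue (hAB : IsSeparation G A B) (xA : tdA.ι) (xB : tdB.ι)
    (hxA : ∀ w : A, w.1 ∈ B → IsPathEnd tdA.tree {x | w ∈ tdA.bag x} xA)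
    (hxB : ∀ w : B, w.1 ∈ A → IsPathEnd tdB.tree {y | w ∈ tdB.bag y} xB) : SpaghettiTD G where
  ι := tdA.ι ⊕ tdB.ι
  finι := have := tdA.finι; have := tdB.finι; inferInstance
  tree := tdA.tree.sum tdB.tree ⊔ edge (Sum.inl xA) (Sum.inr xB)
  isTree := have := tdA.finι; have := tdB.finι; tdA.isTree.sum_sup_edge tdB.isTree xA xB
  bag := Sum.elim (Subtype.val '' tdA.bag ·) (Subtype.val '' tdB.bag ·)
  bag_cover v := by
    rcases hAB.mem_or_mem v with hA | hB
    · obtain ⟨x, hx⟩ := tdA.bag_cover ⟨v, hA⟩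
      exact ⟨Sum.inl x, _, hx, rfl⟩
    · obtain ⟨y, hy⟩ := tdB.bag_cover ⟨v, hB⟩
      exact ⟨Sum.inr y, _, hy, rfl⟩
  bag_edge u v huv := by
    rcases hAB.adj_mem huv with ⟨hu, hv⟩ | ⟨hu, hv⟩
    · obtain ⟨x, hux, hvx⟩ := tdA.bag_edge (show (G.induce A).Adj ⟨u, hu⟩ ⟨v, hv⟩ from huv)
      exact ⟨Sum.inl x, ⟨_, hux, rfl⟩, _, hvx, rfl⟩
    · obtain ⟨y, huy, hvy⟩ := tdB.bag_edge (show (G.induce B).Adj ⟨u, hu⟩ ⟨v, hv⟩ from huv)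
      exact ⟨Sum.inr y, ⟨_, huy, rfl⟩, _, hvy, rfl⟩
  bag_conn v := (isPathSet_glue tdA tdB hAB hxA hxB v).1
  bag_path := isPathSet_glue tdA tdB hAB hxA hxB

lemma ncard_bag_glue_le {hAB : IsSeparation G A B} {xA : tdA.ι} {xB : tdB.ι}
    {hxA : ∀ w : A, w.1 ∈ B → IsPathEnd tdA.tree {x | w ∈ tdA.bag x} xA}
    {hxB : ∀ w : B, w.1 ∈ A → IsPathEnd tdB.tree {y | w ∈ tdB.bag y} xB} {m : ℕ}
    (hA : ∀ x, (tdA.bag x).ncard ≤ m) (hB : ∀ y, (tdB.bag y).ncard ≤ m) (p) :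
    ((tdA.glue tdB hAB xA xB hxA hxB).bag p).ncard ≤ m := by
  rcases p with x | y
  · exact (ncard_image_of_injective _ Subtype.val_injective).trans_le (hA x)
  · exact (ncard_image_of_injective _ Subtype.val_injective).trans_le (hB y)

lemma exists_isPathEnd {H : SimpleGraph W} (td : SpaghettiTD H) {P : Set W}
    (hP : P.Subsingleton) :
    ∃ x, ∀ w ∈ P, IsPathEnd td.tree {y | w ∈ td.bag y} x := by
  have := td.finι
  rcases hP.eq_empty_or_singleton with rfl | ⟨w, rfl⟩
  · obtain ⟨x⟩ := td.isTree.connected.nonempty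
    exact ⟨x, by simp⟩
  · obtain ⟨x, hx⟩ := _root_.exists_isPathEnd td.isTree.isAcyclic (td.bag_conn w)
    exact ⟨x, by simpa using hx⟩

end SpaghettiTD

lemma IsSeparation.sptw_le [Finite V] {G : SimpleGraph V} {A B : Set V} (h : IsSeparation G A B)
    (hAB : (A ∩ B).Subsingleton) {k : ℕ} (hA : sptw (G.induce A) ≤ k)
    (hB : sptw (G.induce B) ≤ k) : sptw G ≤ k := by
  obtain ⟨tdA, htdA⟩ := exists_spaghettiTD_ncard_bag_le_sptw (G.induce A)
  obtain ⟨tdB, htdB⟩ := exists_spaghettiTD_ncard_bag_le_sptw (G.induce B)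
  obtain ⟨xA, hxA⟩ := tdA.exists_isPathEnd <|
    (hAB.preimage Subtype.val_injective).anti fun w (hw : w.1 ∈ B) => ⟨w.2, hw⟩
  obtain ⟨xB, hxB⟩ := tdB.exists_isPathEnd <|
    (hAB.preimage Subtype.val_injective).anti fun w (hw : w.1 ∈ A) => ⟨hw, w.2⟩
  exact sptw_le_of_spaghettiTD (tdA.glue tdB h xA xB hxA hxB) <|
    SpaghettiTD.ncard_bag_glue_le tdA tdB (fun x => (htdA x).trans (by omega))
      (fun y => (htdB y).trans (by omega))

lemma IsSeparation.not_reachable_induce {G : SimpleGraph V} {A B S : Set V}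
    (h : IsSeparation G A B) (hS : Disjoint S (A ∩ B)) {a b : S} (ha : a.1 ∉ B) (hb : b.1 ∉ A) :
    ¬(G.induce S).Reachable a b := by
  rintro ⟨p⟩
  have hbB : b.1 ∈ B := (h.mem_or_mem b.1).resolve_left hb
  obtain ⟨d, -, hd₁, hd₂⟩ := p.exists_boundary_dart {x | x.1 ∉ B} ha (by simpa using hbB)
  rcases h.adj_mem d.adj with ⟨-, hA⟩ | ⟨hB, -⟩
  · exact hS.notMem_of_mem_left d.snd.2 ⟨hA, not_not.mp hd₂⟩
  · exact hd₁ hB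

/-- The neighbours on both sides keep the common vertex from being a one-vertex block of a
side. -/
structure IsOneSeparation (G : SimpleGraph V) (A B : Set V) : Prop extends IsSeparation G A B where
  inter_subsingleton : (A ∩ B).Subsingleton
  exists_adj_left : ∀ v ∈ A ∩ B, ∃ w ∈ A \ B, G.Adj v w
  exists_adj_right : ∀ v ∈ A ∩ B, ∃ w ∈ B \ A, G.Adj v w

lemma IsOneSeparation.symm {G : SimpleGraph V} {A B : Set V} (h : IsOneSeparation G A B) :
    IsOneSeparation G B A where
  toIsSeparation := ⟨union_comm A B ▸ h.union_eq, fun _ _ huv => (h.adj_mem huv).symm⟩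
  inter_subsingleton := inter_comm A B ▸ h.inter_subsingleton
  exists_adj_left v hv := h.exists_adj_right v (inter_comm A B ▸ hv)
  exists_adj_right v hv := h.exists_adj_left v (inter_comm A B ▸ hv)

section Blocks

variable {G : SimpleGraph V} {A B T : Set V}

def induceInducePreimageIso (G : SimpleGraph V) (hT : T ⊆ A) :
    (G.induce A).induce (Subtype.val ⁻¹' T) ≃g G.induce T where
  toEquiv := Equiv.subtypeSubtypeEquivSubtype fun h => hT h
  map_rel_iff' := Iff.rfl

lemma nonempty_preimage_val_iff (hT : T ⊆ A) :
    (Subtype.val ⁻¹' T : Set A).Nonempty ↔ T.Nonempty := by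
  rw [Subtype.preimage_coe_nonempty, inter_eq_right.mpr hT]

lemma noCutVertex_induce_preimage_iff (hT : T ⊆ A) :
    NoCutVertex (G.induce A) (Subtype.val ⁻¹' T) ↔ NoCutVertex G T := by
  have hdiff : ∀ w : A, Subtype.val ⁻¹' T \ {w} = Subtype.val ⁻¹' (T \ {w.1}) := fun w => by
    ext u
    simp [Subtype.ext_iff]
  have hsub : ∀ v, T \ {v} ⊆ A := fun _ => sdiff_subset.trans hT
  constructor
  · intro h v hv hne
    have := h ⟨v, hT hv⟩ hv (by rwa [hdiff, nonempty_preimage_val_iff (hsub v)])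
    rwa [hdiff, (induceInducePreimageIso G (hsub v)).connected_iff] at this
  · intro h w hw hne
    rw [hdiff, nonempty_preimage_val_iff (hsub w)] at hne
    rw [hdiff, (induceInducePreimageIso G (hsub w)).connected_iff]
    exact h w hw hne

lemma noCutVertex_pair {v w : V} (hvw : G.Adj v w) : NoCutVertex G {v, w} := by
  rintro u (rfl | rfl) -
  · rw [pair_sdiff_left hvw.ne]
    exact IsTree.of_subsingleton.connected
  · rw [pair_sdiff_right hvw.ne]
    exact IsTree.of_subsingleton.connected

lemma IsOneSeparation.subset_or_subset (h : IsOneSeparation G A B) {S : Set V}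
    (hconn : (G.induce S).Connected) (hcut : NoCutVertex G S) : S ⊆ A ∨ S ⊆ B := by
  by_contra! hS
  obtain ⟨b, hbS, hbA⟩ := not_subset.mp hS.1
  obtain ⟨a, haS, haB⟩ := not_subset.mp hS.2
  have hconn' : (G.induce (S \ (A ∩ B))).Connected := by
    rcases h.inter_subsingleton.eq_empty_or_singleton with hAB | ⟨v, hAB⟩
    · rwa [hAB, sdiff_empty]
    · rw [hAB]
      by_cases hv : v ∈ S
      · refine hcut v hv ⟨a, haS, fun hav => haB ?_⟩
        exact (hAB.symm ▸ hav : a ∈ A ∩ B).2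
      · rwa [sdiff_singleton_eq_self hv]
  exact h.not_reachable_induce disjoint_sdiff_left (a := ⟨a, haS, fun hab => haB hab.2⟩)
    (b := ⟨b, hbS, fun hab => hbA hab.1⟩) haB hbA (hconn'.preconnected _ _)

lemma IsOneSeparation.isBlock_of_isBlock_induce (h : IsOneSeparation G A B) (hT : T ⊆ A)
    (hblk : IsBlock (G.induce A) (Subtype.val ⁻¹' T)) : IsBlock G T := by
  obtain ⟨hne, hconn, hcut, hmax⟩ := hblk
  rw [nonempty_preimage_val_iff hT] at hne
  rw [(induceInducePreimageIso G hT).connected_iff] at hconn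
  rw [noCutVertex_induce_preimage_iff hT] at hcut
  have hmax' : ∀ S, T ⊆ S → S ⊆ A → (G.induce S).Connected → NoCutVertex G S → S = T := by
    intro S hTS hSA hSconn hScut
    have := hmax _ (preimage_mono hTS)
      ((induceInducePreimageIso G hSA).connected_iff.mpr hSconn)
      ((noCutVertex_induce_preimage_iff hSA).mpr hScut)
    rwa [Subtype.preimage_val_eq_preimage_val_iff, inter_eq_right.mpr hSA,
      inter_eq_right.mpr hT] at this
  -- a block inside `A ∩ B` is a single vertex `v`, but the edge from `v` into `A \ B` is larger
  have hTB : ¬T ⊆ B := by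
    intro hTB
    obtain ⟨v, hv⟩ := hne
    obtain ⟨w, ⟨hwA, hwB⟩, hvw⟩ := h.exists_adj_left v ⟨hT hv, hTB hv⟩
    have hTv : T ⊆ {v, w} := fun u hu =>
      Or.inl (h.inter_subsingleton ⟨hT hu, hTB hu⟩ ⟨hT hv, hTB hv⟩)
    have := hmax' _ hTv (insert_subset (hT hv) (singleton_subset_iff.mpr hwA))
      (induce_pair_connected_of_adj hvw) (noCutVertex_pair hvw)
    exact hwB (hTB (this ▸ Or.inr rfl))
  refine ⟨hne, hconn, hcut, fun S hTS hSconn hScut => ?_⟩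
  refine hmax' S hTS ?_ hSconn hScut
  exact (h.subset_or_subset hSconn hScut).resolve_right fun hSB => hTB (hTS.trans hSB)

end Blocks

section Separations

variable {G : SimpleGraph V}

lemma isOneSeparation_reachable_compl (x : V) :
    IsOneSeparation G {z | G.Reachable x z} {z | G.Reachable x z}ᶜ where
  union_eq := union_compl_self _
  adj_mem u v huv := by
    by_cases hu : G.Reachable x u
    · exact Or.inl ⟨hu, hu.trans huv.reachable⟩
    · exact Or.inr ⟨hu, fun hv => hu (hv.trans huv.symm.reachable)⟩
  inter_subsingleton := by simp
  exists_adj_left _ hv := absurd hv.1 hv.2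
  exists_adj_right _ hv := absurd hv.1 hv.2

lemma exists_adj_of_reachable {C : Set V} {a v : V}
    (hC : ∀ u ∈ C, ∀ w, G.Adj u w → w ≠ v → w ∈ C) (ha : a ∈ C) (hv : v ∉ C)
    (hav : G.Reachable a v) : ∃ w ∈ C, G.Adj w v := by
  obtain ⟨p⟩ := hav
  obtain ⟨d, -, hd₁, hd₂⟩ := p.exists_boundary_dart C ha hv
  have hdv : d.snd = v := by
    by_contra hne
    exact hd₂ (hC _ hd₁ _ d.adj hne)
  exact ⟨d.fst, hd₁, hdv ▸ d.adj⟩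

lemma exists_isOneSeparation_of_not_reachable {x y : V} (hxy : ¬G.Reachable x y) :
    ∃ A B, IsOneSeparation G A B ∧ A ≠ univ ∧ B ≠ univ :=
  ⟨_, _, isOneSeparation_reachable_compl x, (ne_univ_iff_exists_notMem _).mpr ⟨y, hxy⟩,
    (ne_univ_iff_exists_notMem _).mpr ⟨x, fun hx => hx (.refl x)⟩⟩

lemma isSeparation_insert_compl {R : Set V} {v : V}
    (hR : ∀ u ∈ R, ∀ w, G.Adj u w → w ≠ v → w ∈ R) : IsSeparation G (insert v R) Rᶜ where
  union_eq := by rw [insert_union, union_compl_self, insert_eq_of_mem (mem_univ v)]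
  adj_mem u w huw := by
    by_cases hu : u ∈ R <;> by_cases hw : w ∈ R
    · exact Or.inl ⟨.inr hu, .inr hw⟩
    · by_cases hwv : w = v
      · exact Or.inl ⟨.inr hu, .inl hwv⟩
      · exact absurd (hR u hu w huw hwv) hw
    · by_cases huv : u = v
      · exact Or.inl ⟨.inl huv, .inr hw⟩
      · exact absurd (hR w hw u huw.symm huv) hu
    · exact Or.inr ⟨hu, hw⟩

lemma exists_isOneSeparation_of_cut_vertex (hG : G.Preconnected) {v : V}
    {x y : ↥(univ \ {v})} (hxy : ¬(G.induce (univ \ {v})).Reachable x y) :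
    ∃ A B, IsOneSeparation G A B ∧ A ≠ univ ∧ B ≠ univ := by
  set R : Set V := Subtype.val '' {z | (G.induce (univ \ {v})).Reachable x z}
  have hvR : v ∉ R := by
    rintro ⟨z, -, hz⟩
    exact z.2.2 hz
  have hR : ∀ u ∈ R, ∀ w, G.Adj u w → w ≠ v → w ∈ R := by
    rintro _ ⟨u, hu, rfl⟩ w huw hwv
    exact ⟨⟨w, trivial, hwv⟩, hu.trans (Adj.reachable huw), rfl⟩
  have hRc : ∀ u ∈ Rᶜ \ {v}, ∀ w, G.Adj u w → w ≠ v → w ∈ Rᶜ \ {v} :=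
    fun u hu w huw hwv => ⟨fun hw => hu.1 (hR w hw u huw.symm hu.2), hwv⟩
  have hxR : x.1 ∈ R := ⟨x, .refl x, rfl⟩
  have hyR : y.1 ∉ R := by
    rintro ⟨z, hz, hzy⟩
    exact hxy (Subtype.ext hzy ▸ hz)
  have hsep : IsOneSeparation G (insert v R) Rᶜ :=
    { toIsSeparation := isSeparation_insert_compl hR
      inter_subsingleton :=
        (subsingleton_singleton (a := v)).anti fun u ⟨hu, hu'⟩ => hu.resolve_right hu'
      exists_adj_left := by
        rintro u ⟨hu, hu'⟩
        obtain rfl : u = v := hu.resolve_right hu'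
        obtain ⟨w, hw, hwv⟩ := exists_adj_of_reachable hR hxR hvR (hG _ _)
        exact ⟨w, ⟨.inr hw, not_not_intro hw⟩, hwv.symm⟩
      exists_adj_right := by
        rintro u ⟨hu, hu'⟩
        obtain rfl : u = v := hu.resolve_right hu'
        obtain ⟨w, hw, hwv⟩ :=
          exists_adj_of_reachable hRc ⟨hyR, y.2.2⟩ (fun h => h.2 rfl) (hG _ _)
        exact ⟨w, ⟨hw.1, fun h => h.elim hw.2 hw.1⟩, hwv.symm⟩ }
  exact ⟨_, _, hsep, (ne_univ_iff_exists_notMem _).mpr ⟨y, fun h => h.elim y.2.2 hyR⟩,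
    (ne_univ_iff_exists_notMem _).mpr ⟨x, not_not_intro hxR⟩⟩

lemma exists_isOneSeparation_of_not_isBlock_univ [Nonempty V]
    (hG : ¬IsBlock G univ) : ∃ A B, IsOneSeparation G A B ∧ A ≠ univ ∧ B ≠ univ := by
  by_cases hpre : G.Preconnected
  · have hcut : ¬NoCutVertex G univ := fun hcut =>
      hG ⟨univ_nonempty, (induceUnivIso G).connected_iff.mpr ⟨hpre⟩, hcut,
        fun S hS _ _ => univ_subset_iff.mp hS⟩
    simp only [NoCutVertex, not_forall] at hcut
    obtain ⟨v, -, hne, hdisc⟩ := hcut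
    have := hne.to_subtype
    have hnpre : ¬(G.induce (univ \ {v})).Preconnected := fun hp => hdisc ⟨hp⟩
    simp only [Preconnected, not_forall] at hnpre
    obtain ⟨x, y, hxy⟩ := hnpre
    exact exists_isOneSeparation_of_cut_vertex hpre hxy
  · simp only [Preconnected, not_forall] at hpre
    obtain ⟨x, y, hxy⟩ := hpre
    exact exists_isOneSeparation_of_not_reachable hxy

end Separations

lemma IsOneSeparation.sptw_induce_le_of_forall_isBlock [Finite V] {G : SimpleGraph V}
    {A B : Set V} (hAB : IsOneSeparation G A B) {k : ℕ}
    (h : ∀ S, IsBlock G S → sptw (G.induce S) ≤ k) (S : Set A) (hS : IsBlock (G.induce A) S) :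
    sptw ((G.induce A).induce S) ≤ k := by
  have hT : Subtype.val '' S ⊆ A := image_subset_iff.mpr fun x _ => x.2
  rw [← preimage_image_eq S Subtype.val_injective] at hS ⊢
  exact (sptw_le_sptw_of_embedding (induceInducePreimageIso G hT).toEmbedding).trans
    (h _ (hAB.isBlock_of_isBlock_induce hT hS))

theorem sptw_le_of_forall_isBlock [Finite V] (G : SimpleGraph V) {k : ℕ}
    (h : ∀ S, IsBlock G S → sptw (G.induce S) ≤ k) : sptw G ≤ k := by
  induction hn : Nat.card V using Nat.strong_induction_on generalizing V with
  | _ n ih =>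
  rcases isEmpty_or_nonempty V with _ | _
  · simp [sptw_eq_zero_of_isEmpty]
  by_cases hG : IsBlock G univ
  · exact (sptw_le_sptw_of_embedding (induceUnivIso G).symm.toEmbedding).trans (h _ hG)
  obtain ⟨A, B, hAB, hA, hB⟩ := exists_isOneSeparation_of_not_isBlock_univ hG
  have hpart : ∀ {A B}, IsOneSeparation G A B → A ≠ univ → sptw (G.induce A) ≤ k := by
    intro A B hAB hA
    obtain ⟨a, ha⟩ := (ne_univ_iff_exists_notMem A).mp hA
    exact ih _ (hn ▸ Finite.card_subtype_lt ha) (G.induce A)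
      (hAB.sptw_induce_le_of_forall_isBlock h) rfl
  exact hAB.sptw_le hAB.inter_subsingleton (hpart hAB hA) (hpart hAB.symm hB)

theorem statement5_general {V : Type} [Fintype V] (G : SimpleGraph V) (k : ℕ) :
    sptw G ≤ k ↔ ∀ S : Set V, IsBlock G S → sptw (G.induce S) ≤ k :=
  ⟨fun h S _ => (sptw_le_sptw_of_embedding (Embedding.induce S)).trans h,
    sptw_le_of_forall_isBlock G⟩

/-- For every positive integer `k`, a finite simple graph has spaghetti treewidth at
most `k` iff every block of it has spaghetti treewidth at most `k`. -/
theorem statement5 {V : Type} [Fintype V] (G : SimpleGraph V) (k : ℕ) (hk : 1 ≤ k) :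
    sptw G ≤ k ↔ ∀ S : Set V, IsBlock G S → sptw (G.induce S) ≤ k :=
  statement5_general G k
end

section
/- Let G be a finite simple graph with at least two vertices and let v be a vertex of G adjacent to all other vertices of G. Then spctw(G) = sptw(G) = dptw(G) = pw(G) = pw(G − v) + 1, i.e., the special treewidth, spaghetti treewidth, directed spaghetti treewidth, and pathwidth of G are all equal, and all equal one plus the pathwidth of G − v. -/
open SimpleGraph

/-!
Let `v` be adjacent to every other vertex. In a tree decomposition in which the nodes
containing `v` induce a path, the bags along that path already form a path decomposition:
an edge `uw` of `G` spans a triangle with `v`, so by the Helly property of subtrees some node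
contains `u`, `w` and `v`, and it lies on the path of `v`. Conversely a path decomposition is a
special (rooted at its last node), spaghetti and directed spaghetti tree decomposition of the path
graph with the same bags, so all four widths coincide.

For the last equation, `v` may be assumed to lie in every bag of an optimal path decomposition
of `G` (clamp the indices into the interval of bags containing `v`), so deleting `v` lowers the
width by exactly one, while adding `v` to every bag of a decomposition of `G - v` raises it by
at most one.
-/

namespace SimpleGraph

variable {ι : Type} {T : SimpleGraph ι}

theorem Walk.IsPath.exists_isPath_through_common {a b c : ι} {p : T.Walk a b} {q : T.Walk b c}
    (hp : p.IsPath) (hq : q.IsPath) :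
    ∃ r : T.Walk a c, r.IsPath ∧ (∀ z ∈ r.support, z ∈ p.support ∨ z ∈ q.support) ∧
      ∃ w ∈ r.support, w ∈ p.support ∧ w ∈ q.support := by
  classical
  induction p with
  | nil => exact ⟨q, hq, by simp_all, _, q.start_mem_support, by simp, q.start_mem_support⟩
  | @cons a a' b h p ih =>
    rw [Walk.cons_isPath_iff] at hp
    by_cases haq : a ∈ q.support
    · refine ⟨q.dropUntil a haq, hq.dropUntil haq,
        fun z hz => Or.inr (q.support_dropUntil_subset_support haq hz), a, ?_, ?_, haq⟩ <;> simp
    obtain ⟨r, hr, hrpq, w, hwr, hwp, hwq⟩ := ih hp.1 hq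
    refine ⟨.cons h r, hr.cons fun har => ?_, fun z hz => ?_, w, by simp [hwr], by simp [hwp], hwq⟩
    · rcases hrpq a har with h' | h'
      exacts [hp.2 h', haq h']
    · rcases List.mem_cons.mp (Walk.support_cons h r ▸ hz) with rfl | hz
      · simp
      · rcases hrpq z hz with h' | h' <;> simp [h']

namespace IsTree

variable {S : Set ι}

theorem support_subset_of_isPath (hT : T.IsTree) (hS : (T.induce S).Connected) {x y : ι}
    {p : T.Walk x y} (hp : p.IsPath) (hx : x ∈ S) (hy : y ∈ S) : ∀ z ∈ p.support, z ∈ S := by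
  classical
  obtain ⟨q⟩ := hS.preconnected ⟨x, hx⟩ ⟨y, hy⟩
  let q' := q.map (Embedding.induce S).toHom
  have hq' : p = q'.bypass := (hT.existsUnique_path x y).unique hp q'.bypass_isPath
  intro z hz
  have hz' : z ∈ q'.support := q'.support_bypass_subset_support (hq' ▸ hz)
  rw [Walk.support_map] at hz'
  obtain ⟨z', -, rfl⟩ := List.mem_map.mp hz'
  exact z'.2

theorem getVert_mem_of_isPath (hT : T.IsTree) (hS : (T.induce S).Connected) {a b : ι}
    {P : T.Walk a b} (hP : P.IsPath) {i j k : ℕ} (hij : i ≤ j) (hjk : j ≤ k)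
    (hi : P.getVert i ∈ S) (hk : P.getVert k ∈ S) : P.getVert j ∈ S := by
  have hq := (hP.drop i).take (k - i)
  have hend : (P.drop i).getVert (k - i) = P.getVert k := by
    rw [Walk.drop_getVert, Nat.add_sub_cancel' (hij.trans hjk)]
  have hj : ((P.drop i).take (k - i)).getVert (j - i) = P.getVert j := by
    rw [Walk.take_getVert, Walk.drop_getVert, min_eq_right (by omega), Nat.add_sub_cancel' hij]
  exact hj ▸ hT.support_subset_of_isPath hS hq hi (hend ▸ hk) _ (Walk.getVert_mem_support _ _)

theorem exists_mem_of_pairwise_inter (hT : T.IsTree) {A B C : Set ι}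
    (hA : (T.induce A).Connected) (hB : (T.induce B).Connected) (hC : (T.induce C).Connected)
    {a b c : ι}
    (haB : a ∈ B) (haC : a ∈ C) (hbA : b ∈ A) (hbC : b ∈ C) (hcA : c ∈ A) (hcB : c ∈ B) :
    ∃ w, w ∈ A ∧ w ∈ B ∧ w ∈ C := by
  obtain ⟨p, hp⟩ := (hT.existsUnique_path a b).exists
  obtain ⟨q, hq⟩ := (hT.existsUnique_path b c).exists
  obtain ⟨r, hr, -, w, hwr, hwp, hwq⟩ := hp.exists_isPath_through_common hq
  exact ⟨w, hT.support_subset_of_isPath hA hq hbA hcA w hwq,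
    hT.support_subset_of_isPath hB hr haB hcB w hwr,
    hT.support_subset_of_isPath hC hp haC hbC w hwp⟩

end IsTree

/-- A longest path inside `C` covers `C`: a vertex of `C` next to the path but off it would
either extend the path at an end or give an interior vertex three neighbours in `C`. -/
theorem exists_isPath_support_eq [Finite ι] {C : Set ι} (hC : (T.induce C).Connected)
    (hdeg : ∀ x ∈ C, {y | y ∈ C ∧ T.Adj x y}.ncard ≤ 2) :
    ∃ (a b : ι) (P : T.Walk a b), P.IsPath ∧ ∀ z, z ∈ P.support ↔ z ∈ C := by
  have := Fintype.ofFinite ι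
  set L := {n | ∃ (a b : ι) (P : T.Walk a b), P.IsPath ∧ (∀ z ∈ P.support, z ∈ C) ∧ P.length = n}
  have hbdd : BddAbove L := ⟨Fintype.card ι, fun n ⟨_, _, P, hP, _, hn⟩ => hn ▸ hP.length_lt.le⟩
  obtain ⟨⟨c, hc⟩⟩ := hC.nonempty
  obtain ⟨a, b, P, hP, hPC, hlen⟩ := Nat.sSup_mem
    ⟨0, show 0 ∈ L from ⟨c, c, .nil, .nil, by simpa, rfl⟩⟩ hbdd
  have hmax : ∀ {a' b' : ι} (Q : T.Walk a' b'), Q.IsPath → (∀ z ∈ Q.support, z ∈ C) →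
      Q.length ≤ P.length := fun Q hQ hQC => hlen ▸ le_csSup hbdd ⟨_, _, Q, hQ, hQC, rfl⟩
  refine ⟨a, b, P, hP, fun z => ⟨hPC z, fun hz => ?_⟩⟩
  by_contra hzP
  obtain ⟨q⟩ := hC.preconnected ⟨a, hPC a P.start_mem_support⟩ ⟨z, hz⟩
  obtain ⟨⟨⟨⟨w, hwC⟩, ⟨t, htC⟩⟩, hwt⟩, -, hw, ht⟩ :=
    q.exists_boundary_dart {x | x.1 ∈ P.support} P.start_mem_support hzP
  replace hw : w ∈ P.support := hw
  replace ht : t ∉ P.support := ht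
  replace hwt : T.Adj w t := hwt
  obtain ⟨i, rfl, hi⟩ := Walk.mem_support_iff_exists_getVert.mp hw
  rcases Nat.eq_zero_or_pos i with rfl | hi0
  · rw [Walk.getVert_zero] at hwt
    have := hmax (.cons hwt.symm P) (hP.cons ht) (by simpa [htC] using hPC)
    simp at this
  rcases hi.eq_or_lt with rfl | hilt
  · rw [Walk.getVert_length] at hwt
    have := hmax (P.concat hwt) (hP.concat ht hwt) (by
      simp only [Walk.support_concat, List.mem_append, List.mem_singleton]
      rintro z (hz | rfl)
      exacts [hPC z hz, htC])
    simp at this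
  have hprev : T.Adj (P.getVert i) (P.getVert (i - 1)) := by
    simpa [Nat.sub_add_cancel hi0] using (P.adj_getVert_succ (i := i - 1) (by omega)).symm
  have hne : P.getVert (i - 1) ≠ P.getVert (i + 1) := fun h => by
    have := hP.getVert_injOn (by simp; omega) (by simp; omega) h
    omega
  have hsub : {t, P.getVert (i - 1), P.getVert (i + 1)} ⊆ {y | y ∈ C ∧ T.Adj (P.getVert i) y} := by
    rintro y (rfl | rfl | rfl)
    exacts [⟨htC, hwt⟩, ⟨hPC _ (P.getVert_mem_support _), hprev⟩,
      ⟨hPC _ (P.getVert_mem_support _), P.adj_getVert_succ hilt⟩]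
  have h3 : ({t, P.getVert (i - 1), P.getVert (i + 1)} : Set ι).ncard = 3 :=
    Set.ncard_eq_three.mpr ⟨_, _, _, fun h => ht (by rw [h]; exact P.getVert_mem_support _),
      fun h => ht (by rw [h]; exact P.getVert_mem_support _), hne, rfl⟩
  have := (Set.ncard_le_ncard hsub (Set.toFinite _)).trans (hdeg _ (hPC _ hw))
  omega

theorem isDirPathSet_of_ncard_le_one [Finite ι] {o : ι → ι → Prop} {S : Set ι}
    (ho : ∀ x y, T.Adj x y ↔ o x y ∨ o y x) (hS : (T.induce S).Connected)
    (hout : ∀ x ∈ S, {y | y ∈ S ∧ o x y}.ncard ≤ 1)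
    (hin : ∀ x ∈ S, {y | y ∈ S ∧ o y x}.ncard ≤ 1) : IsDirPathSet T o S := by
  refine ⟨⟨hS, fun x hx => ?_⟩, hout, hin⟩
  have hunion : {y | y ∈ S ∧ T.Adj x y} = {y | y ∈ S ∧ o x y} ∪ {y | y ∈ S ∧ o y x} := by
    ext y
    simp [ho, and_or_left]
  rw [hunion]
  exact (Set.ncard_union_le _ _).trans (add_le_add (hout x hx) (hin x hx))

section PathGraph

variable {m : ℕ}

theorem pathGraph_exists_walk {i j : Fin m} (hij : i ≤ j) :
    ∃ p : (pathGraph m).Walk i j, p.length = (j : ℕ) - i ∧ ∀ z ∈ p.support, i ≤ z ∧ z ≤ j := by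
  obtain ⟨d, hd⟩ : ∃ d, (j : ℕ) - i = d := ⟨_, rfl⟩
  induction d generalizing i with
  | zero =>
    obtain rfl : i = j := Fin.ext (by rw [Fin.le_def] at hij; omega)
    exact ⟨.nil, by simp, by simp⟩
  | succ d ih =>
    rw [Fin.le_def] at hij
    let i' : Fin m := ⟨i + 1, by omega⟩
    obtain ⟨p, hp, hpij⟩ :=
      ih (i := i') (by rw [Fin.le_def]; simp [i']; omega) (by simp [i']; omega)
    refine ⟨.cons (pathGraph_adj.mpr (.inl rfl)) p, by simp [hp, i']; omega, fun z hz => ?_⟩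
    rcases List.mem_cons.mp (Walk.support_cons _ p ▸ hz) with rfl | hz
    · exact ⟨le_rfl, Fin.le_def.mpr hij⟩
    · exact ⟨(Fin.le_def.mpr (Nat.le_succ _)).trans (hpij z hz).1, (hpij z hz).2⟩

theorem pathGraph_le_add_length {i j : Fin m} (p : (pathGraph m).Walk i j) :
    (j : ℕ) ≤ i + p.length := by
  induction p with
  | nil => simp
  | cons h p ih => rcases pathGraph_adj.mp h with h | h <;> simp <;> omega

theorem pathGraph_dist {i j : Fin m} (hij : i ≤ j) : (pathGraph m).dist i j = (j : ℕ) - i := by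
  obtain ⟨p, hp, -⟩ := pathGraph_exists_walk hij
  obtain ⟨q, hq⟩ := p.reachable.exists_walk_length_eq_dist
  have := pathGraph_le_add_length q
  have := dist_le p
  omega

theorem pathGraph_isAcyclic : (pathGraph m).IsAcyclic := by
  suffices h : ∀ x y : Fin m, (x : ℕ) + 1 = y → (pathGraph m).IsBridge s(x, y) by
    refine isAcyclic_iff_forall_adj_isBridge.mpr fun x y hxy => ?_
    rcases pathGraph_adj.mp hxy with hxy | hxy
    exacts [h x y hxy, Sym2.eq_swap ▸ h y x hxy]
  refine fun x y hxy => isBridge_iff_forall_walk_mem_edges.mpr fun p => ?_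
  obtain ⟨⟨⟨a, b⟩, hab⟩, hd, ha, hb⟩ := p.exists_boundary_dart {z | z ≤ x}
    (show x ≤ x from le_rfl) (show ¬ y ≤ x by rw [Fin.le_def]; omega)
  replace hab : (pathGraph m).Adj a b := hab
  replace ha : (a : ℕ) ≤ x := ha
  replace hb : (x : ℕ) < b := not_le.mp hb
  obtain ⟨rfl, rfl⟩ : a = x ∧ b = y := by
    rcases pathGraph_adj.mp hab with h | h <;> constructor <;> apply Fin.ext <;> omega
  exact p.edges_eq_map_darts ▸ List.mem_map_of_mem hd

theorem pathGraph_isTree (hm : 0 < m) : (pathGraph m).IsTree := by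
  obtain ⟨n, rfl⟩ := Nat.exists_eq_add_of_lt hm
  exact ⟨pathGraph_connected _, pathGraph_isAcyclic⟩

theorem pathGraph_induce_connected {S : Set (Fin m)} (hS : S.Nonempty)
    (hconv : ∀ i j k, i ≤ j → j ≤ k → i ∈ S → k ∈ S → j ∈ S) :
    ((pathGraph m).induce S).Connected := by
  obtain ⟨i, hi⟩ := hS
  refine (connected_iff_exists_forall_reachable _).mpr ⟨⟨i, hi⟩, fun ⟨j, hj⟩ => ?_⟩
  rcases le_total i j with h | h
  · obtain ⟨p, -, hp⟩ := pathGraph_exists_walk h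
    exact ⟨p.induce S fun z hz => hconv i z j (hp z hz).1 (hp z hz).2 hi hj⟩
  · obtain ⟨p, -, hp⟩ := pathGraph_exists_walk h
    exact ⟨(p.induce S fun z hz => hconv j z i (hp z hz).1 (hp z hz).2 hj hi).reverse⟩

theorem pathGraph_isDirPathSet {S : Set (Fin m)} (hS : ((pathGraph m).induce S).Connected) :
    IsDirPathSet (pathGraph m) (fun x y => (x : ℕ) + 1 = y) S := by
  refine isDirPathSet_of_ncard_le_one (fun _ _ => pathGraph_adj) hS (fun x _ => ?_) (fun x _ => ?_)
  all_goals
    refine (Set.ncard_le_one (Set.toFinite _)).mpr fun a ha b hb => Fin.ext ?_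
    have := ha.2
    have := hb.2
    omega

theorem pathGraph_adj_and_dist_lt_iff (hm : 0 < m) (x y : Fin m) :
    ((pathGraph m).Adj x y ∧ (pathGraph m).dist y ⟨m - 1, by omega⟩ <
      (pathGraph m).dist x ⟨m - 1, by omega⟩) ↔ (x : ℕ) + 1 = y := by
  rw [pathGraph_adj, pathGraph_dist (Fin.le_def.mpr (by omega : (y : ℕ) ≤ m - 1)),
    pathGraph_dist (Fin.le_def.mpr (by omega : (x : ℕ) ≤ m - 1))]
  dsimp only
  omega

end PathGraph

end SimpleGraph

namespace PathDecomp

variable {V : Type} {G : SimpleGraph V} (pd : PathDecomp G)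

abbrev toTreeDecomp : TreeDecomp G where
  ι := Fin pd.m
  finι := inferInstance
  tree := pathGraph pd.m
  isTree := pathGraph_isTree pd.hm
  bag := pd.bag
  bag_cover := pd.bag_cover
  bag_edge := pd.bag_edge
  bag_conn u := pathGraph_induce_connected (pd.bag_cover u) (pd.bag_convex u)

def toSpaghettiTD : SpaghettiTD G where
  toTreeDecomp := pd.toTreeDecomp
  bag_path u := (pathGraph_isDirPathSet (pd.toTreeDecomp.bag_conn u)).1

def toDirSpaghettiTD : DirSpaghettiTD G where
  toTreeDecomp := pd.toTreeDecomp
  orient x y := (x : ℕ) + 1 = y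
  orient_iff _ _ := pathGraph_adj
  orient_asymm _ _ h h' := by omega
  bag_dirpath u := pathGraph_isDirPathSet (pd.toTreeDecomp.bag_conn u)

def toSpecialTD : SpecialTD G where
  toTreeDecomp := pd.toTreeDecomp
  root := ⟨pd.m - 1, by have := pd.hm; omega⟩
  bag_vertical u := by
    convert pathGraph_isDirPathSet (pd.toTreeDecomp.bag_conn u) using 3
    exact pathGraph_adj_and_dist_lt_iff pd.hm _ _

end PathDecomp

namespace TreeDecomp

variable {V : Type} {G : SimpleGraph V} (td : TreeDecomp G)

theorem exists_bag_of_triangle {a b c : V} (hab : G.Adj a b) (hbc : G.Adj b c) (hac : G.Adj a c) :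
    ∃ x, a ∈ td.bag x ∧ b ∈ td.bag x ∧ c ∈ td.bag x := by
  obtain ⟨x, hxa, hxb⟩ := td.bag_edge hab
  obtain ⟨y, hyb, hyc⟩ := td.bag_edge hbc
  obtain ⟨z, hza, hzc⟩ := td.bag_edge hac
  exact td.isTree.exists_mem_of_pairwise_inter (td.bag_conn a) (td.bag_conn b) (td.bag_conn c)
    hyb hyc hza hzc hxa hxb

theorem exists_pathDecomp_of_isPathSet {v : V} (hv : ∀ w, w ≠ v → G.Adj v w)
    (hpath : IsPathSet td.tree {x | v ∈ td.bag x}) :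
    ∃ pd : PathDecomp G, Set.range pd.bag ⊆ Set.range td.bag := by
  have := td.finι
  obtain ⟨a, b, P, hP, hsupp⟩ := exists_isPath_support_eq hpath.1 hpath.2
  have hnode : ∀ x, v ∈ td.bag x → ∃ i : Fin (P.length + 1), P.getVert i = x := fun x hx => by
    obtain ⟨i, rfl, hi⟩ := Walk.mem_support_iff_exists_getVert.mp ((hsupp x).mpr hx)
    exact ⟨⟨i, by omega⟩, rfl⟩
  have hedge : ∀ ⦃u w⦄, G.Adj u w → ∃ x, v ∈ td.bag x ∧ u ∈ td.bag x ∧ w ∈ td.bag x := by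
    intro u w huw
    by_cases hu : u = v
    · obtain ⟨x, hux, hwx⟩ := td.bag_edge huw
      exact ⟨x, hu ▸ hux, hux, hwx⟩
    by_cases hw : w = v
    · obtain ⟨x, hux, hwx⟩ := td.bag_edge huw
      exact ⟨x, hw ▸ hwx, hux, hwx⟩
    exact td.exists_bag_of_triangle (hv u hu) huw (hv w hw)
  refine ⟨⟨P.length + 1, P.length.succ_pos, fun i => td.bag (P.getVert i), fun u => ?_,
    fun u w huw => ?_, fun u i j k hij hjk hi hk => ?_⟩, ?_⟩
  · by_cases hu : u = v
    · exact ⟨0, hu ▸ (hsupp _).mp (P.getVert_mem_support 0)⟩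
    obtain ⟨x, hvx, -, hux⟩ := hedge (hv u hu)
    obtain ⟨i, rfl⟩ := hnode x hvx
    exact ⟨i, hux⟩
  · obtain ⟨x, hvx, hux, hwx⟩ := hedge huw
    obtain ⟨i, rfl⟩ := hnode x hvx
    exact ⟨i, hux, hwx⟩
  · exact td.isTree.getVert_mem_of_isPath (td.bag_conn u) hP hij hjk hi hk
  · rintro _ ⟨i, rfl⟩
    exact ⟨_, rfl⟩

end TreeDecomp

theorem setOf_ncard_bag_le_eq {V α β : Type*} {ια : α → Type*} {ιβ : β → Type*}
    {A : ∀ a, ια a → Set V} {B : ∀ b, ιβ b → Set V}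
    (hAB : ∀ a, ∃ b, Set.range (B b) ⊆ Set.range (A a))
    (hBA : ∀ b, ∃ a, Set.range (A a) ⊆ Set.range (B b)) :
    {k : ℕ | ∃ a, ∀ i, (A a i).ncard ≤ k + 1} = {k : ℕ | ∃ b, ∀ j, (B b j).ncard ≤ k + 1} := by
  ext k
  constructor
  · rintro ⟨a, ha⟩
    obtain ⟨b, hb⟩ := hAB a
    exact ⟨b, fun j => by obtain ⟨i, hi⟩ := hb ⟨j, rfl⟩; exact hi ▸ ha i⟩
  · rintro ⟨b, hb⟩
    obtain ⟨a, ha⟩ := hBA b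
    exact ⟨a, fun i => by obtain ⟨j, hj⟩ := ha ⟨i, rfl⟩; exact hj ▸ hb j⟩

section UniversalVertex

variable {V : Type} {G : SimpleGraph V} {v : V}

theorem spctw_eq_pw (hv : ∀ w, w ≠ v → G.Adj v w) : spctw G = pw G :=
  congrArg sInf <| setOf_ncard_bag_le_eq
    (fun td => td.exists_pathDecomp_of_isPathSet hv (td.bag_vertical v).1)
    (fun pd => ⟨pd.toSpecialTD, subset_rfl⟩)

theorem sptw_eq_pw (hv : ∀ w, w ≠ v → G.Adj v w) : sptw G = pw G :=
  congrArg sInf <| setOf_ncard_bag_le_eq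
    (fun td => td.exists_pathDecomp_of_isPathSet hv (td.bag_path v))
    (fun pd => ⟨pd.toSpaghettiTD, subset_rfl⟩)

theorem dptw_eq_pw (hv : ∀ w, w ≠ v → G.Adj v w) : dptw G = pw G :=
  congrArg sInf <| setOf_ncard_bag_le_eq
    (fun td => td.exists_pathDecomp_of_isPathSet hv (td.bag_dirpath v).1)
    (fun pd => ⟨pd.toDirSpaghettiTD, subset_rfl⟩)

end UniversalVertex

theorem max_min_mem_uIcc {α : Type*} [LinearOrder α] {lo hi j : α} (i : α)
    (hj : j ∈ Set.Icc lo hi) : max lo (min i hi) ∈ Set.uIcc i j := by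
  rw [Set.mem_uIcc]
  rcases le_total i j with hij | hji
  · exact .inl ⟨le_max_of_le_right (le_min le_rfl (hij.trans hj.2)),
      max_le hj.1 ((min_le_left _ _).trans hij)⟩
  · exact .inr ⟨le_max_of_le_right (le_min hji hj.2), max_le (hj.1.trans hji) (min_le_left _ _)⟩

namespace PathDecomp

variable {V : Type} {G : SimpleGraph V}

def induce (pd : PathDecomp G) (s : Set V) : PathDecomp (G.induce s) where
  m := pd.m
  hm := pd.hm
  bag i := Subtype.val ⁻¹' pd.bag i
  bag_cover u := pd.bag_cover u
  bag_edge _ _ h := pd.bag_edge h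
  bag_convex u := pd.bag_convex u

theorem ncard_induce_bag (pd : PathDecomp G) (s : Set V) (i : Fin pd.m) :
    ((pd.induce s).bag i).ncard = (s ∩ pd.bag i).ncard := by
  rw [← Set.ncard_image_of_injective _ Subtype.val_injective]
  exact congrArg Set.ncard (Subtype.image_preimage_coe s (pd.bag i))

def ofInduce {s : Set V} (pd : PathDecomp (G.induce s)) : PathDecomp G where
  m := pd.m
  hm := pd.hm
  bag i := Subtype.val '' pd.bag i ∪ sᶜ
  bag_cover u := by
    by_cases hu : u ∈ s
    · obtain ⟨i, hi⟩ := pd.bag_cover ⟨u, hu⟩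
      exact ⟨i, .inl ⟨_, hi, rfl⟩⟩
    · exact ⟨⟨0, pd.hm⟩, .inr hu⟩
  bag_edge u w huw := by
    by_cases hu : u ∈ s <;> by_cases hw : w ∈ s
    · obtain ⟨i, hui, hwi⟩ := pd.bag_edge (show (G.induce s).Adj ⟨u, hu⟩ ⟨w, hw⟩ from huw)
      exact ⟨i, .inl ⟨_, hui, rfl⟩, .inl ⟨_, hwi, rfl⟩⟩
    · obtain ⟨i, hi⟩ := pd.bag_cover ⟨u, hu⟩
      exact ⟨i, .inl ⟨_, hi, rfl⟩, .inr hw⟩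
    · obtain ⟨i, hi⟩ := pd.bag_cover ⟨w, hw⟩
      exact ⟨i, .inr hu, .inl ⟨_, hi, rfl⟩⟩
    · exact ⟨⟨0, pd.hm⟩, .inr hu, .inr hw⟩
  bag_convex u i j k hij hjk hi hk := by
    by_cases hu : u ∈ s
    · have hmem : ∀ l, u ∈ Subtype.val '' pd.bag l ∪ sᶜ → ⟨u, hu⟩ ∈ pd.bag l := by
        rintro l (⟨_, hl, rfl⟩ | hl)
        exacts [hl, absurd hu hl]
      exact .inl ⟨_, pd.bag_convex _ i j k hij hjk (hmem i hi) (hmem k hk), rfl⟩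
    · exact .inr hu

theorem ncard_ofInduce_bag_le {s : Set V} (pd : PathDecomp (G.induce s)) (i : Fin pd.m) :
    (pd.ofInduce.bag i).ncard ≤ (pd.bag i).ncard + sᶜ.ncard := by
  refine (Set.ncard_union_le _ _).trans_eq ?_
  rw [Set.ncard_image_of_injective _ Subtype.val_injective]

theorem mem_bag_of_mem_uIcc (pd : PathDecomp G) {u : V} {i j k : Fin pd.m} (hi : u ∈ pd.bag i)
    (hk : u ∈ pd.bag k) (hj : j ∈ Set.uIcc i k) : u ∈ pd.bag j := by
  rcases le_total i k with hik | hki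
  · rw [Set.uIcc_of_le hik] at hj
    exact pd.bag_convex u i j k hj.1 hj.2 hi hk
  · rw [Set.uIcc_of_ge hki] at hj
    exact pd.bag_convex u k j i hj.1 hj.2 hk hi

/-- Clamping every index into the interval of bags that contain `v` keeps a path
decomposition, since all neighbours of `v` meet that interval. -/
theorem exists_forall_mem_bag (pd : PathDecomp G) {v : V} (hv : ∀ w, w ≠ v → G.Adj v w) :
    ∃ pd' : PathDecomp G, (∀ i, v ∈ pd'.bag i) ∧ Set.range pd'.bag ⊆ Set.range pd.bag := by
  classical
  have hI : (Finset.univ.filter fun i => v ∈ pd.bag i).Nonempty := by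
    obtain ⟨i, hi⟩ := pd.bag_cover v
    exact ⟨i, by simpa using hi⟩
  set lo := (Finset.univ.filter fun i => v ∈ pd.bag i).min' hI
  set hi := (Finset.univ.filter fun i => v ∈ pd.bag i).max' hI
  have hv_lo : v ∈ pd.bag lo := by simpa using Finset.min'_mem _ hI
  have hv_hi : v ∈ pd.bag hi := by simpa using Finset.max'_mem _ hI
  have hIcc : ∀ j, v ∈ pd.bag j → j ∈ Set.Icc lo hi := fun j hj =>
    ⟨Finset.min'_le _ j (by simpa using hj), Finset.le_max' _ j (by simpa using hj)⟩
  set clamp := fun i => max lo (min i hi)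
  have hmono : Monotone clamp := fun i j hij => max_le_max le_rfl (min_le_min hij le_rfl)
  have hclamp : ∀ {u} i j, u ∈ pd.bag i → u ∈ pd.bag j → v ∈ pd.bag j → u ∈ pd.bag (clamp i) :=
    fun i j hui huj hvj => pd.mem_bag_of_mem_uIcc hui huj (max_min_mem_uIcc i (hIcc j hvj))
  have hwith : ∀ u, ∃ j, u ∈ pd.bag j ∧ v ∈ pd.bag j := fun u => by
    by_cases hu : u = v
    · obtain ⟨j, hj⟩ := pd.bag_cover v
      exact ⟨j, hu ▸ hj, hj⟩
    · obtain ⟨j, hvj, huj⟩ := pd.bag_edge (hv u hu)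
      exact ⟨j, huj, hvj⟩
  refine ⟨⟨pd.m, pd.hm, fun i => pd.bag (clamp i), fun u => ?_, fun u w huw => ?_,
    fun u i j k hij hjk hi hk => pd.bag_convex u _ _ _ (hmono hij) (hmono hjk) hi hk⟩,
    fun i => pd.bag_convex v lo _ hi (le_max_left _ _)
      (max_le (hIcc hi hv_hi).1 (min_le_right _ _)) hv_lo hv_hi, ?_⟩
  · obtain ⟨j, huj, hvj⟩ := hwith u
    exact ⟨j, hclamp j j huj huj hvj⟩
  · obtain ⟨i, hui, hwi⟩ := pd.bag_edge huw
    obtain ⟨j, huj, hvj⟩ := hwith u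
    obtain ⟨k, hwk, hvk⟩ := hwith w
    exact ⟨i, hclamp i j hui huj hvj, hclamp i k hwi hwk hvk⟩
  · rintro _ ⟨i, rfl⟩
    exact ⟨_, rfl⟩

end PathDecomp

section Pathwidth

variable {V : Type} {G : SimpleGraph V}

theorem pw_le_of_ncard_bag_le (pd : PathDecomp G) {k : ℕ} (h : ∀ i, (pd.bag i).ncard ≤ k + 1) :
    pw G ≤ k :=
  Nat.sInf_le ⟨pd, h⟩

theorem exists_pathDecomp_ncard_bag_le_pw (G : SimpleGraph V) :
    ∃ pd : PathDecomp G, ∀ i, (pd.bag i).ncard ≤ pw G + 1 := by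
  have huniv : ∃ pd : PathDecomp G, ∀ i, (pd.bag i).ncard ≤ Nat.card V + 1 :=
    ⟨⟨1, one_pos, fun _ => Set.univ, fun _ => ⟨0, trivial⟩, fun _ _ _ => ⟨0, trivial, trivial⟩,
      fun _ _ _ _ _ _ _ _ => trivial⟩, fun _ => by simp [Set.ncard_univ]⟩
  exact Nat.sInf_mem (s := {k | ∃ pd : PathDecomp G, ∀ i, (pd.bag i).ncard ≤ k + 1}) ⟨_, huniv⟩

theorem pw_le_pw_induce_add_ncard_compl (s : Set V) : pw G ≤ pw (G.induce s) + sᶜ.ncard := by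
  obtain ⟨pd, hpd⟩ := exists_pathDecomp_ncard_bag_le_pw (G.induce s)
  refine pw_le_of_ncard_bag_le pd.ofInduce fun i => ?_
  have := pd.ncard_ofInduce_bag_le i
  have := hpd i
  omega

theorem pw_induce_ne_add_one_le [Finite V] {v w : V} (hw : w ≠ v)
    (hv : ∀ w, w ≠ v → G.Adj v w) : pw (G.induce {x | x ≠ v}) + 1 ≤ pw G := by
  obtain ⟨pd, hpd⟩ := exists_pathDecomp_ncard_bag_le_pw G
  obtain ⟨pd', hv_mem, hpd'⟩ := pd.exists_forall_mem_bag hv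
  have hwidth : ∀ i, (pd'.bag i).ncard ≤ pw G + 1 := fun i => by
    obtain ⟨j, hj⟩ := hpd' ⟨i, rfl⟩
    exact hj ▸ hpd j
  have hsize : ∀ i : Fin pd'.m,
      ((pd'.induce {x | x ≠ v}).bag i).ncard + 1 = (pd'.bag i).ncard := fun i => by
    rw [PathDecomp.ncard_induce_bag, ← Set.compl_singleton_eq, ← Set.sdiff_eq_compl_inter,
      Set.ncard_sdiff_singleton_add_one (hv_mem i)]
  have hpos : 1 ≤ pw G := by
    obtain ⟨i, hvi, hwi⟩ := pd'.bag_edge (hv w hw)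
    have := Set.ncard_le_ncard (Set.insert_subset hvi (Set.singleton_subset_iff.mpr hwi))
    rw [Set.ncard_pair hw.symm] at this
    have := hwidth i
    omega
  have := pw_le_of_ncard_bag_le (pd'.induce {x | x ≠ v}) (k := pw G - 1) fun i => by
    have := hsize i
    have := hwidth i
    omega
  omega

theorem pw_induce_ne_add_one [Finite V] {v w : V} (hw : w ≠ v) (hv : ∀ w, w ≠ v → G.Adj v w) :
    pw (G.induce {x | x ≠ v}) + 1 = pw G := by
  refine le_antisymm (pw_induce_ne_add_one_le hw hv) ?_
  have hcompl : ({x | x ≠ v}ᶜ : Set V).ncard = 1 := Set.ncard_eq_one.mpr ⟨v, by ext; simp⟩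
  simpa [hcompl] using pw_le_pw_induce_add_ncard_compl (G := G) {x | x ≠ v}

end Pathwidth

theorem statement7_general {V : Type} (G : SimpleGraph V) (h2 : 2 ≤ Nat.card V)
    (v : V) (hv : ∀ w : V, w ≠ v → G.Adj v w) :
    spctw G = sptw G ∧ sptw G = dptw G ∧ dptw G = pw G ∧
      pw G = pw (G.induce {x | x ≠ v}) + 1 := by
  have : Finite V := Nat.finite_of_card_ne_zero (by omega)
  have : Nontrivial V := Finite.one_lt_card_iff_nontrivial.mp h2
  obtain ⟨w, hw⟩ := exists_ne v
  rw [spctw_eq_pw hv, sptw_eq_pw hv, dptw_eq_pw hv, pw_induce_ne_add_one hw hv]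
  exact ⟨rfl, rfl, rfl, rfl⟩

/-- If `v` is adjacent to all other vertices of a graph `G` with at least two
vertices, then the special treewidth, spaghetti treewidth, directed spaghetti
treewidth and pathwidth of `G` coincide, and equal `pw (G - v) + 1`. -/
theorem statement7 {V : Type} [Fintype V] (G : SimpleGraph V) (h2 : 2 ≤ Nat.card V)
    (v : V) (hv : ∀ w : V, w ≠ v → G.Adj v w) :
    spctw G = sptw G ∧ sptw G = dptw G ∧ dptw G = pw G ∧
      pw G = pw (G.induce {x | x ≠ v}) + 1 :=
  statement7_general G h2 v hv
end

section
/- The strongly chordal treewidth of the graph S_3 is exactly three. -/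
open SimpleGraph

/-!
Every strongly chordal supergraph of `S₃` gives the outer 6-cycle `0 1 2 3 4 5` an odd chord,
i.e. one of the long diagonals `{0, 3}`, `{1, 4}`, `{2, 5}`. Each of them joins a vertex of the
triangle `1 3 5` to a vertex adjacent to the other two triangle vertices, so it spans a `K₄`
with the triangle. Conversely, adding the diagonal `{1, 4}` already suffices: in the resulting
graph `0` and `2` are simplicial and the other four vertices form a clique, so it is chordal
with clique number four, and its only Hamiltonian cycle is the outer one, which contains `{1, 4}`
as an odd chord.
-/

section InducedCycle

variable {V : Type} {G : SimpleGraph V} {S : Set V} {n : ℕ}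

theorem exists_adj_adj_not_adj_of_induce_iso_cycGraph (hn : 4 ≤ n)
    (e : G.induce S ≃g cycGraph n) (v : S) :
    ∃ u w : S, G.Adj v u ∧ G.Adj v w ∧ u ≠ w ∧ ¬ G.Adj u w := by
  have hne : ∀ k : ℕ, 0 < k → k < n → (k : ZMod n) ≠ 0 := fun k hk hkn h =>
    hk.ne' (Nat.eq_zero_of_dvd_of_lt ((ZMod.natCast_eq_zero_iff k n).1 h) hkn)
  have h1 : (1 : ZMod n) ≠ 0 := by exact_mod_cast hne 1 one_pos (by omega)
  have h2 : (2 : ZMod n) ≠ 0 := by exact_mod_cast hne 2 two_pos (by omega)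
  have h3 : (3 : ZMod n) ≠ 0 := by exact_mod_cast hne 3 three_pos (by omega)
  have hadj : ∀ {a b : S}, G.Adj a b ↔ (cycGraph n).Adj (e a) (e b) := e.map_adj_iff.symm
  obtain ⟨i, rfl⟩ := e.symm.surjective v
  refine ⟨e.symm (i + 1), e.symm (i - 1), hadj.2 ?_, hadj.2 ?_,
    e.symm.injective.ne fun h => h2 (by linear_combination h), hadj.not.2 ?_⟩ <;>
    rw [e.apply_symm_apply, e.apply_symm_apply]
  · exact ⟨fun h => h1 (by linear_combination -h), .inr rfl⟩
  · exact ⟨fun h => h1 (by linear_combination h), .inl (by ring)⟩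
  · rintro ⟨-, h | h⟩
    · exact h1 (by linear_combination h)
    · exact h3 (by linear_combination -h)

theorem not_isClique_neighborSet_of_induce_iso_cycGraph (hn : 4 ≤ n)
    (e : G.induce S ≃g cycGraph n) (v : S) : ¬ G.IsClique (G.neighborSet v) := by
  obtain ⟨u, w, hu, hw, huw, hnuw⟩ := exists_adj_adj_not_adj_of_induce_iso_cycGraph hn e v
  exact fun h => hnuw (h hu hw (Subtype.coe_injective.ne huw))

/-- A vertex on a chordless cycle of length at least four is not simplicial, so such a cycle
lies inside the set of non-simplicial vertices; if that set is a clique there is no room for it. -/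
theorem isChordal_of_isClique_setOf_not_isClique_neighborSet
    (h : G.IsClique {v | ¬ G.IsClique (G.neighborSet v)}) : IsChordal G := by
  rintro S n hn ⟨e⟩
  obtain ⟨u, w, -, -, huw, hnuw⟩ :=
    exists_adj_adj_not_adj_of_induce_iso_cycGraph hn e (e.symm 0)
  exact hnuw (h (not_isClique_neighborSet_of_induce_iso_cycGraph hn e u)
    (not_isClique_neighborSet_of_induce_iso_cycGraph hn e w) (Subtype.coe_injective.ne huw))

end InducedCycle

theorem sctw_eq_of_le_of_forall_not_cliqueFree {V : Type} {G H : SimpleGraph V} {k : ℕ}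
    (hGH : G ≤ H) (hH : IsStronglyChordal H) (hk : H.CliqueFree (k + 2))
    (hlow : ∀ H' : SimpleGraph V, G ≤ H' → IsStronglyChordal H' → ¬ H'.CliqueFree (k + 1)) :
    sctw G = k := by
  have hmem : k ∈ {k | ∃ H : SimpleGraph V, G ≤ H ∧ IsStronglyChordal H ∧ H.CliqueFree (k + 2)} :=
    ⟨H, hGH, hH, hk⟩
  refine le_antisymm (Nat.sInf_le hmem) (le_csInf ⟨k, hmem⟩ ?_)
  rintro m ⟨H', hGH', hH', hm⟩
  by_contra! hmk
  exact hlow H' hGH' hH' (hm.mono (by omega))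

/-- Mathlib's instance for `edge` is built with `rw` and does not reduce in the kernel, which
`decide` needs. -/
instance {V : Type} [DecidableEq V] (s t : V) : DecidableRel (edge s t).Adj :=
  fun v w => decidable_of_iff _ (edge_adj s t v w).symm

instance : DecidableRel S3.Adj := inferInstanceAs (DecidableRel (SimpleGraph.fromRel _).Adj)

theorem S3_adj_finEquiv_symm_add_one (i : ZMod 6) :
    S3.Adj ((ZMod.finEquiv 6).symm i) ((ZMod.finEquiv 6).symm (i + 1)) := by
  revert i; decide

theorem exists_isNClique_S3_sup_edge_add_three (i : ZMod 6) : ∃ s : Finset (Fin 6),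
    (S3 ⊔ edge ((ZMod.finEquiv 6).symm i) ((ZMod.finEquiv 6).symm (i + 3))).IsNClique 4 s := by
  revert i; decide

theorem not_cliqueFree_four_of_S3_le {H : SimpleGraph (Fin 6)} (hle : S3 ≤ H)
    (hH : IsStronglyChordal H) : ¬ H.CliqueFree 4 := by
  let c := (ZMod.finEquiv 6).symm
  obtain ⟨i, d, -, hd, hd6, hchord⟩ :=
    hH.2 6 le_rfl (by decide) c c.injective fun i => hle (S3_adj_finEquiv_symm_add_one i)
  obtain rfl : d = 3 := by omega
  obtain ⟨s, hs⟩ := exists_isNClique_S3_sup_edge_add_three i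
  exact fun hcf => hcf s (hs.mono (sup_le hle ((edge_le_iff _).2 (.inr hchord))))

def S3WithChord : SimpleGraph (Fin 6) := S3 ⊔ edge 1 4

instance : DecidableRel S3WithChord.Adj := inferInstanceAs (DecidableRel (S3 ⊔ edge 1 4).Adj)

theorem S3WithChord_cliqueFree_five : S3WithChord.CliqueFree 5 := by
  intro s; revert s; decide

theorem S3WithChord_isChordal : IsChordal S3WithChord := by
  apply isChordal_of_isClique_setOf_not_isClique_neighborSet
  have hsimplicial : ∀ v x y : Fin 6, v = 0 ∨ v = 2 → S3WithChord.Adj v x →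
      S3WithChord.Adj v y → x ≠ y → S3WithChord.Adj x y := by decide
  have hclique : ∀ x y : Fin 6, x ≠ 0 → x ≠ 2 → y ≠ 0 → y ≠ 2 → x ≠ y →
      S3WithChord.Adj x y := by decide
  have hmem : ∀ v, ¬ S3WithChord.IsClique (S3WithChord.neighborSet v) → v ≠ 0 ∧ v ≠ 2 :=
    fun v hv => not_or.1 fun h0 => hv fun x hx y hy => hsimplicial v x y h0 hx hy
  intro x hx y hy
  exact hclique x y (hmem x hx).1 (hmem x hx).2 (hmem y hy).1 (hmem y hy).2

theorem S3WithChord_adj_diagonal : ∀ a b, S3WithChord.Adj a b → ∀ c, S3WithChord.Adj b c →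
    ∀ d, S3WithChord.Adj c d → ∀ e, S3WithChord.Adj d e → ∀ f, S3WithChord.Adj e f →
    S3WithChord.Adj f a → [a, b, c, d, e, f].Nodup →
    S3WithChord.Adj a d ∨ S3WithChord.Adj b e ∨ S3WithChord.Adj c f := by
  decide

theorem S3WithChord_isStronglyChordal : IsStronglyChordal S3WithChord := by
  refine ⟨S3WithChord_isChordal, fun n hn _ f hf hadj => ?_⟩
  have : NeZero n := ⟨by omega⟩
  obtain rfl : n = 6 :=
    le_antisymm (by simpa [ZMod.card] using Fintype.card_le_of_injective f hf) hn
  have hnodup : [f 0, f 1, f 2, f 3, f 4, f 5].Nodup :=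
    (show ([0, 1, 2, 3, 4, 5] : List (ZMod 6)).Nodup by decide).map hf
  rcases S3WithChord_adj_diagonal _ _ (hadj 0) _ (hadj 1) _ (hadj 2) _ (hadj 3) _ (hadj 4)
    (hadj 5) hnodup with h | h | h
  · exact ⟨0, 3, by decide, le_rfl, le_rfl, h⟩
  · exact ⟨1, 3, by decide, le_rfl, le_rfl, h⟩
  · exact ⟨2, 3, by decide, le_rfl, le_rfl, h⟩

/-- The strongly chordal treewidth of the 3-sun `S₃` is exactly three. -/
theorem statement11 : sctw S3 = 3 :=
  sctw_eq_of_le_of_forall_not_cliqueFree le_sup_left S3WithChord_isStronglyChordal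
    S3WithChord_cliqueFree_five fun _ hle hH => not_cliqueFree_four_of_S3_le hle hH
end
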